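/- arXiv:1607.02862 — 4 statements merged into one kernel-verified Lean document; each statement's English description precedes it below -/
import Mathlib

section
/- Suppose α* > 2, ρ* = 1 and F*² = 1 + (1-α*)². Then the matrix L₊ (case β = 1) has exactly two purely imaginary eigenvalues ±iω* with ω* = √(α*-2), each algebraically double and geometrically simple. -/
/-!
`L₊` is the first-order form of the second-order system `u'' = A u` with
`A = [[3ψᵣ² + ψᵢ² - α, 2ψᵣψᵢ - 1], [2ψᵣψᵢ + 1, ψᵣ² + 3ψᵢ² - α]]`, so `det (X - L₊) = det (X² - A)`.
On `ψᵣ² + ψᵢ² = 1` one has `tr A = -2(α - 2)` and `det A = (α - 2)²`, hence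
`det (X - L₊) = (X² + ω²)²`. An eigenvector of `L₊` is determined by its first coordinate
because the coupling `2ψᵣψᵢ - 1 = -(ψᵣ - ψᵢ)²` is nonzero, `ψᵢ` being `(1 - α) ψᵣ`.
-/

open Matrix

/-- The first-order form of `u'' = a u + b v`, `v'' = c u + d v` in the coordinates
`(u, u', v, v')`. -/
def secondOrderSystemMatrix {R : Type*} [Zero R] [One R] (a b c d : R) :
    Matrix (Fin 4) (Fin 4) R :=
  !![0, 1, 0, 0; a, 0, b, 0; 0, 0, 0, 1; c, 0, d, 0]

theorem det_smul_one_sub_secondOrderSystemMatrix {R : Type*} [CommRing R] (a b c d X : R) :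
    det (X • (1 : Matrix (Fin 4) (Fin 4) R) - secondOrderSystemMatrix a b c d) =
      (X ^ 2 - a) * (X ^ 2 - d) - b * c := by
  simp [secondOrderSystemMatrix, det_succ_row_zero, Fin.sum_univ_succ, Fin.succAbove, one_apply]
  ring

theorem finrank_ker_secondOrderSystemMatrix_sub_smul_one {K : Type*} [Field K]
    {a b c d μ : K} (hb : b ≠ 0)
    (hμ : det (μ • (1 : Matrix (Fin 4) (Fin 4) K) - secondOrderSystemMatrix a b c d) = 0) :
    Module.finrank K (LinearMap.ker
      ((secondOrderSystemMatrix a b c d - μ • (1 : Matrix (Fin 4) (Fin 4) K)).mulVecLin)) = 1 := by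
  rw [det_smul_one_sub_secondOrderSystemMatrix] at hμ
  -- The first three rows of `(M - μ) x = 0` give `b • x = x 0 • v`; the last one holds for `v`
  -- exactly because `μ` is a root.
  set v : Fin 4 → K := ![b, μ * b, μ ^ 2 - a, μ * (μ ^ 2 - a)]
  have hv : v ≠ 0 := fun h => hb (congrFun h 0)
  suffices LinearMap.ker ((secondOrderSystemMatrix a b c d - μ • 1).mulVecLin) = K ∙ v by
    rw [this, finrank_span_singleton hv]
  apply le_antisymm
  · intro x hx
    rw [LinearMap.mem_ker, mulVecLin_apply] at hx
    have e0 := congrFun hx 0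
    have e1 := congrFun hx 1
    have e2 := congrFun hx 2
    simp only [mulVec, dotProduct, secondOrderSystemMatrix, Matrix.sub_apply, of_apply, cons_val',
      cons_val_fin_one, cons_val_zero, Matrix.smul_apply, one_apply, smul_eq_mul, mul_ite, mul_one,
      mul_zero, Fin.sum_univ_four, ↓reduceIte, zero_sub, neg_mul, cons_val_one, zero_ne_one, sub_zero,
      one_mul, cons_val, Fin.reduceEq, sub_self, zero_mul, add_zero, Pi.zero_apply, one_ne_zero,
      zero_add] at e0 e1 e2
    refine (Submodule.smul_mem_iff _ hb).mp (Submodule.mem_span_singleton.mpr ⟨x 0, ?_⟩)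
    ext i
    fin_cases i <;>
      simp only [Fin.zero_eta, Fin.mk_one, Fin.reduceFinMk, Pi.smul_apply, cons_val_zero,
        cons_val_one, cons_val, smul_eq_mul, v]
    · ring
    · linear_combination -b * e0
    · linear_combination -e1 - μ * e0
    · linear_combination -(b * e2) - μ * e1 - μ ^ 2 * e0
  · rw [Submodule.span_le, Set.singleton_subset_iff, SetLike.mem_coe, LinearMap.mem_ker,
      mulVecLin_apply]
    ext i
    fin_cases i <;> simp [v, secondOrderSystemMatrix, mulVec, dotProduct, Fin.sum_univ_four, one_apply]
    · ring
    · linear_combination -hμ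

theorem sq_add_sq_eq_one_of_sq_eq {α F ψr ψi : ℝ} (hF2 : F ^ 2 = 1 + (1 - α) ^ 2)
    (hψr : ψr = F / (1 + (1 - α) ^ 2)) (hψi : ψi = F * (1 - α) / (1 + (1 - α) ^ 2)) :
    ψr ^ 2 + ψi ^ 2 = 1 := by
  have hs : (1 + (1 - α) ^ 2) ≠ 0 := by positivity
  rw [hψr, hψi]
  field_simp
  linear_combination hF2

theorem two_mul_mul_sub_one_ne_zero {α ψr ψi : ℝ} (hα : α ≠ 0) (hρ : ψr ^ 2 + ψi ^ 2 = 1)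
    (hψi : ψi = (1 - α) * ψr) : 2 * ψr * ψi - 1 ≠ 0 := by
  have hψr : ψr ≠ 0 := by
    rintro rfl
    simp [hψi] at hρ
  intro h
  have : (α * ψr) ^ 2 = 0 := by rw [hψi] at hρ h; linear_combination hρ - h
  simp_all

theorem stmt_9_general (α F : ℝ) (hα : 2 < α) (hF2 : F ^ 2 = 1 + (1 - α) ^ 2)
    (ψr ψi ω : ℝ)
    (hψr : ψr = F / (1 + (1 - α) ^ 2)) (hψi : ψi = F * (1 - α) / (1 + (1 - α) ^ 2))
    (hω : ω = Real.sqrt (α - 2))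
    (L : Matrix (Fin 4) (Fin 4) ℂ)
    (hL : L = !![0, 1, 0, 0;
                 ((3 * ψr ^ 2 + ψi ^ 2 - α : ℝ) : ℂ), 0, ((2 * ψr * ψi - 1 : ℝ) : ℂ), 0;
                 0, 0, 0, 1;
                 ((2 * ψr * ψi + 1 : ℝ) : ℂ), 0, ((ψr ^ 2 + 3 * ψi ^ 2 - α : ℝ) : ℂ), 0]) :
    -- the spectrum consists exactly of ±iω, each with algebraic multiplicity two
    (∀ X : ℂ, Matrix.det (X • (1 : Matrix (Fin 4) (Fin 4) ℂ) - L) =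
      (X - Complex.I * ω) ^ 2 * (X + Complex.I * ω) ^ 2) ∧
    -- each eigenvalue ±iω is geometrically simple
    Module.finrank ℂ (LinearMap.ker
      ((L - (Complex.I * ω) • (1 : Matrix (Fin 4) (Fin 4) ℂ)).mulVecLin)) = 1 ∧
    Module.finrank ℂ (LinearMap.ker
      ((L + (Complex.I * ω) • (1 : Matrix (Fin 4) (Fin 4) ℂ)).mulVecLin)) = 1 := by
  have hρ : ψr ^ 2 + ψi ^ 2 = 1 := sq_add_sq_eq_one_of_sq_eq hF2 hψr hψi
  have hω2 : (ω : ℂ) ^ 2 = α - 2 := by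
    rw [hω]; exact_mod_cast Real.sq_sqrt (by linarith)
  have hψi' : ψi = (1 - α) * ψr := by rw [hψi, hψr]; ring
  have hb : ((2 * ψr * ψi - 1 : ℝ) : ℂ) ≠ 0 :=
    Complex.ofReal_ne_zero.mpr (two_mul_mul_sub_one_ne_zero (by linarith) hρ hψi')
  replace hL : L = secondOrderSystemMatrix _ _ _ _ := hL
  have hdet (X : ℂ) : det (X • (1 : Matrix (Fin 4) (Fin 4) ℂ) - L) = (X ^ 2 + ω ^ 2) ^ 2 := by
    rw [hL, det_smul_one_sub_secondOrderSystemMatrix]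
    have hρC : (ψr : ℂ) ^ 2 + (ψi : ℂ) ^ 2 = 1 := by exact_mod_cast hρ
    push_cast
    linear_combination (3 * ((ψr : ℂ) ^ 2 + ψi ^ 2) + 3 - 4 * α - 4 * X ^ 2) * hρC -
      (2 * X ^ 2 + ω ^ 2 + α - 2) * hω2
  have hI : (Complex.I * ω) ^ 2 = -ω ^ 2 := by rw [mul_pow, Complex.I_sq, neg_one_mul]
  have heig {μ : ℂ} (hμ : μ ^ 2 = -ω ^ 2) : det (μ • (1 : Matrix (Fin 4) (Fin 4) ℂ) - L) = 0 := by
    rw [hdet, hμ]; ring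
  refine ⟨fun X => ?_, ?_, ?_⟩
  · rw [hdet, ← mul_pow]
    congr 1
    linear_combination (ω : ℂ) ^ 2 * Complex.I_sq
  · rw [hL] at heig ⊢
    exact finrank_ker_secondOrderSystemMatrix_sub_smul_one hb (heig hI)
  · rw [← sub_neg_eq_add, ← neg_smul, hL]
    rw [hL] at heig
    exact finrank_ker_secondOrderSystemMatrix_sub_smul_one hb (heig (by rw [neg_sq, hI]))

theorem stmt_9 (α F : ℝ) (hα : 2 < α) (hF : 0 < F) (hF2 : F ^ 2 = 1 + (1 - α) ^ 2)
    (ψr ψi ω : ℝ)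
    (hψr : ψr = F / (1 + (1 - α) ^ 2)) (hψi : ψi = F * (1 - α) / (1 + (1 - α) ^ 2))
    (hω : ω = Real.sqrt (α - 2))
    (L : Matrix (Fin 4) (Fin 4) ℂ)
    (hL : L = !![0, 1, 0, 0;
                 ((3 * ψr ^ 2 + ψi ^ 2 - α : ℝ) : ℂ), 0, ((2 * ψr * ψi - 1 : ℝ) : ℂ), 0;
                 0, 0, 0, 1;
                 ((2 * ψr * ψi + 1 : ℝ) : ℂ), 0, ((ψr ^ 2 + 3 * ψi ^ 2 - α : ℝ) : ℂ), 0]) :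
    -- the spectrum consists exactly of ±iω, each with algebraic multiplicity two
    (∀ X : ℂ, Matrix.det (X • (1 : Matrix (Fin 4) (Fin 4) ℂ) - L) =
      (X - Complex.I * ω) ^ 2 * (X + Complex.I * ω) ^ 2) ∧
    -- each eigenvalue ±iω is geometrically simple
    Module.finrank ℂ (LinearMap.ker
      ((L - (Complex.I * ω) • (1 : Matrix (Fin 4) (Fin 4) ℂ)).mulVecLin)) = 1 ∧
    Module.finrank ℂ (LinearMap.ker
      ((L + (Complex.I * ω) • (1 : Matrix (Fin 4) (Fin 4) ℂ)).mulVecLin)) = 1 :=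
  stmt_9_general α F hα hF2 ψr ψi ω hψr hψi hω L hL
end

section
/- With ω* = √(α*-2), α* > 2, ρ* = 1, C = α*/(2-α*), the vector ζ₀ = (C, iω*C, 1, iω*)ᵀ satisfies L₊ζ₀ = iω*ζ₀, and the vector ζ₁ = (2iω*/(1+2ψᵣ*ψᵢ*), C - 2ω*²/(1+2ψᵣ*ψᵢ*), 0, 1)ᵀ satisfies (L₊ - iω*)ζ₁ = ζ₀; moreover Sζ₀ = conj(ζ₀) and Sζ₁ = -conj(ζ₁) for S = diag(1,-1,1,-1). -/
/-!
`L₊` is the first-order form of two coupled second-order equations with coefficient matrix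
`(a b; c d)`, so `(x, μx, 1, μ)` is an eigenvector for `μ` exactly when
`(a b; c d) (x, 1) = μ² (x, 1)`, and `(2μ/c, x + 2μ²/c, 0, 1)` is a Jordan vector above it as soon
as `a - μ² = x c`. For `μ = iω*` we have `μ² = 2 - α*`, and `F*² = D := 1 + (1 - α*)²` gives
`ψᵣ*² = 1/D`, `ψᵢ*² = (1 - α*)²/D`, `ψᵣ*ψᵢ* = (1 - α*)/D`; the three conditions then become rational
identities in `α*`, and `c = (α* - 2)²/D ≠ 0`.
-/

open Matrix Complex

section BlockMatrix

variable {K : Type*}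

theorem blockMatrix_mulVec [CommRing K] (a b c d : K) (v : Fin 4 → K) :
    !![0, 1, 0, 0; a, 0, b, 0; 0, 0, 0, 1; c, 0, d, 0] *ᵥ v
      = ![v 1, a * v 0 + b * v 2, v 3, c * v 0 + d * v 2] := by
  ext i; fin_cases i <;> simp [mulVec, dotProduct, Fin.sum_univ_four]

theorem blockMatrix_mulVec_eigenvector [CommRing K] {a b c d x μ : K}
    (h₁ : a * x + b = μ ^ 2 * x) (h₂ : c * x + d = μ ^ 2) :
    !![0, 1, 0, 0; a, 0, b, 0; 0, 0, 0, 1; c, 0, d, 0] *ᵥ ![x, μ * x, 1, μ]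
      = μ • ![x, μ * x, 1, μ] := by
  rw [blockMatrix_mulVec]
  ext i; fin_cases i <;>
    simp only [Fin.isValue, Fin.zero_eta, Fin.mk_one, Fin.reduceFinMk, cons_val, cons_val_zero,
      cons_val_one, Pi.smul_apply, smul_eq_mul, mul_one]
  · linear_combination h₁
  · linear_combination h₂

theorem blockMatrix_mulVec_generalizedEigenvector [Field K] {a b c d x μ : K}
    (hc : c ≠ 0) (h : a - μ ^ 2 = x * c) :
    !![0, 1, 0, 0; a, 0, b, 0; 0, 0, 0, 1; c, 0, d, 0] *ᵥ ![2 * μ / c, x + 2 * μ ^ 2 / c, 0, 1]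
        - μ • ![2 * μ / c, x + 2 * μ ^ 2 / c, 0, 1]
      = ![x, μ * x, 1, μ] := by
  rw [blockMatrix_mulVec]
  ext i; fin_cases i <;>
    simp only [Fin.isValue, Fin.zero_eta, Fin.mk_one, Fin.reduceFinMk, cons_val, cons_val_zero,
      cons_val_one, Pi.sub_apply, Pi.smul_apply, smul_eq_mul, mul_zero, mul_one, add_zero,
      sub_zero] <;>
    field_simp
  · ring
  · linear_combination 2 * μ * h
  · ring

end BlockMatrix

theorem diagonal_alternating_mulVec (v : Fin 4 → ℂ) :
    diagonal ![1, -1, 1, -1] *ᵥ v = ![v 0, -v 1, v 2, -v 3] := by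
  ext i; fin_cases i <;> simp [mulVec_diagonal]

section SteadyState

variable {α F ψr ψi : ℝ}

theorem sq_psiR (hF2 : F ^ 2 = 1 + (1 - α) ^ 2) (hψr : ψr = F / (1 + (1 - α) ^ 2)) :
    ψr ^ 2 = 1 / (1 + (1 - α) ^ 2) := by
  rw [hψr]; field_simp; linear_combination hF2

theorem sq_psiI (hF2 : F ^ 2 = 1 + (1 - α) ^ 2) (hψi : ψi = F * (1 - α) / (1 + (1 - α) ^ 2)) :
    ψi ^ 2 = (1 - α) ^ 2 / (1 + (1 - α) ^ 2) := by
  rw [hψi]; field_simp; linear_combination (1 - α) ^ 2 * hF2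

theorem psiR_mul_psiI (hF2 : F ^ 2 = 1 + (1 - α) ^ 2) (hψr : ψr = F / (1 + (1 - α) ^ 2))
    (hψi : ψi = F * (1 - α) / (1 + (1 - α) ^ 2)) :
    ψr * ψi = (1 - α) / (1 + (1 - α) ^ 2) := by
  rw [hψr, hψi]; field_simp; linear_combination (1 - α) * hF2

end SteadyState

section Coefficients

variable {α ψr ψi : ℝ}

theorem two_mul_psiR_mul_psiI_add_one_ne_zero
    (hri : ψr * ψi = (1 - α) / (1 + (1 - α) ^ 2)) (hα : α ≠ 2) : 2 * ψr * ψi + 1 ≠ 0 := by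
  have hD : 1 + (1 - α) ^ 2 ≠ 0 := by positivity
  have hc : 2 * ψr * ψi + 1 = (α - 2) ^ 2 / (1 + (1 - α) ^ 2) := by
    rw [mul_assoc, hri]; field_simp; ring
  rw [hc]
  exact div_ne_zero (pow_ne_zero 2 (sub_ne_zero.mpr hα)) hD

theorem eigenCondition_fst (hrr : ψr ^ 2 = 1 / (1 + (1 - α) ^ 2))
    (hii : ψi ^ 2 = (1 - α) ^ 2 / (1 + (1 - α) ^ 2)) (hri : ψr * ψi = (1 - α) / (1 + (1 - α) ^ 2))
    (hα : α ≠ 2) :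
    (3 * ψr ^ 2 + ψi ^ 2 - α) * (α / (2 - α)) + (2 * ψr * ψi - 1) = (2 - α) * (α / (2 - α)) := by
  have : 2 - α ≠ 0 := sub_ne_zero.mpr (Ne.symm hα)
  rw [mul_assoc, hrr, hii, hri]; field_simp; ring

theorem eigenCondition_snd (hrr : ψr ^ 2 = 1 / (1 + (1 - α) ^ 2))
    (hii : ψi ^ 2 = (1 - α) ^ 2 / (1 + (1 - α) ^ 2)) (hri : ψr * ψi = (1 - α) / (1 + (1 - α) ^ 2))
    (hα : α ≠ 2) :
    (2 * ψr * ψi + 1) * (α / (2 - α)) + (ψr ^ 2 + 3 * ψi ^ 2 - α) = 2 - α := by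
  have : 2 - α ≠ 0 := sub_ne_zero.mpr (Ne.symm hα)
  rw [mul_assoc, hrr, hii, hri]; field_simp; ring

theorem jordanCondition (hrr : ψr ^ 2 = 1 / (1 + (1 - α) ^ 2))
    (hii : ψi ^ 2 = (1 - α) ^ 2 / (1 + (1 - α) ^ 2)) (hri : ψr * ψi = (1 - α) / (1 + (1 - α) ^ 2))
    (hα : α ≠ 2) :
    (3 * ψr ^ 2 + ψi ^ 2 - α) - (2 - α) = α / (2 - α) * (2 * ψr * ψi + 1) := by
  have : 2 - α ≠ 0 := sub_ne_zero.mpr (Ne.symm hα)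
  rw [mul_assoc, hrr, hii, hri]; field_simp; ring

end Coefficients

theorem stmt_10_general (α F : ℝ) (hα : 2 < α) (hF2 : F ^ 2 = 1 + (1 - α) ^ 2)
    (ψr ψi ω C : ℝ)
    (hψr : ψr = F / (1 + (1 - α) ^ 2)) (hψi : ψi = F * (1 - α) / (1 + (1 - α) ^ 2))
    (hω : ω = Real.sqrt (α - 2)) (hC : C = α / (2 - α))
    (L S : Matrix (Fin 4) (Fin 4) ℂ)
    (hL : L = !![0, 1, 0, 0;
                 ((3 * ψr ^ 2 + ψi ^ 2 - α : ℝ) : ℂ), 0, ((2 * ψr * ψi - 1 : ℝ) : ℂ), 0;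
                 0, 0, 0, 1;
                 ((2 * ψr * ψi + 1 : ℝ) : ℂ), 0, ((ψr ^ 2 + 3 * ψi ^ 2 - α : ℝ) : ℂ), 0])
    (hS : S = Matrix.diagonal ![1, -1, 1, -1])
    (ζ₀ ζ₁ : Fin 4 → ℂ)
    (hζ₀ : ζ₀ = ![(C : ℂ), Complex.I * ω * C, 1, Complex.I * ω])
    (hζ₁ : ζ₁ = ![2 * Complex.I * ω / (1 + 2 * ψr * ψi),
                  (C : ℂ) - 2 * ω ^ 2 / (1 + 2 * ψr * ψi), 0, 1]) :
    L.mulVec ζ₀ = (Complex.I * ω) • ζ₀ ∧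
    L.mulVec ζ₁ - (Complex.I * ω) • ζ₁ = ζ₀ ∧
    S.mulVec ζ₀ = star ζ₀ ∧
    S.mulVec ζ₁ = -star ζ₁ := by
  have hα2 : α ≠ 2 := hα.ne'
  have hrr := sq_psiR hF2 hψr
  have hii := sq_psiI hF2 hψi
  have hri := psiR_mul_psiI hF2 hψr hψi
  have hc := two_mul_psiR_mul_psiI_add_one_ne_zero hri hα2
  have hμ : (I * ω) ^ 2 = ((2 - α : ℝ) : ℂ) := by
    rw [mul_pow, I_sq, ← ofReal_pow, hω, Real.sq_sqrt (by linarith)]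
    push_cast; ring
  have hζ₁' : ζ₁ = ![2 * (I * ω) / ((2 * ψr * ψi + 1 : ℝ) : ℂ),
      (C : ℂ) + 2 * (I * ω) ^ 2 / ((2 * ψr * ψi + 1 : ℝ) : ℂ), 0, 1] := by
    rw [hζ₁, mul_pow, I_sq]; push_cast; ring_nf
  subst hL hS hζ₀ hC
  refine ⟨blockMatrix_mulVec_eigenvector ?_ ?_, ?_, ?_, ?_⟩
  · rw [hμ]; exact_mod_cast eigenCondition_fst hrr hii hri hα2
  · rw [hμ]; exact_mod_cast eigenCondition_snd hrr hii hri hα2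
  · rw [hζ₁']
    refine blockMatrix_mulVec_generalizedEigenvector (ofReal_ne_zero.mpr hc) ?_
    rw [hμ]; exact_mod_cast jordanCondition hrr hii hri hα2
  · rw [diagonal_alternating_mulVec]
    ext i; fin_cases i <;> simp
  · rw [hζ₁, diagonal_alternating_mulVec]
    ext i; fin_cases i <;> simp [neg_div]

theorem stmt_10 (α F : ℝ) (hα : 2 < α) (hF : 0 < F) (hF2 : F ^ 2 = 1 + (1 - α) ^ 2)
    (ψr ψi ω C : ℝ)
    (hψr : ψr = F / (1 + (1 - α) ^ 2)) (hψi : ψi = F * (1 - α) / (1 + (1 - α) ^ 2))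
    (hω : ω = Real.sqrt (α - 2)) (hC : C = α / (2 - α))
    (L S : Matrix (Fin 4) (Fin 4) ℂ)
    (hL : L = !![0, 1, 0, 0;
                 ((3 * ψr ^ 2 + ψi ^ 2 - α : ℝ) : ℂ), 0, ((2 * ψr * ψi - 1 : ℝ) : ℂ), 0;
                 0, 0, 0, 1;
                 ((2 * ψr * ψi + 1 : ℝ) : ℂ), 0, ((ψr ^ 2 + 3 * ψi ^ 2 - α : ℝ) : ℂ), 0])
    (hS : S = Matrix.diagonal ![1, -1, 1, -1])
    (ζ₀ ζ₁ : Fin 4 → ℂ)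
    (hζ₀ : ζ₀ = ![(C : ℂ), Complex.I * ω * C, 1, Complex.I * ω])
    (hζ₁ : ζ₁ = ![2 * Complex.I * ω / (1 + 2 * ψr * ψi),
                  (C : ℂ) - 2 * ω ^ 2 / (1 + 2 * ψr * ψi), 0, 1]) :
    L.mulVec ζ₀ = (Complex.I * ω) • ζ₀ ∧
    L.mulVec ζ₁ - (Complex.I * ω) • ζ₁ = ζ₀ ∧
    S.mulVec ζ₀ = star ζ₀ ∧
    S.mulVec ζ₁ = -star ζ₁ :=
  stmt_10_general α F hα hF2 ψr ψi ω C hψr hψi hω hC L S hL hS ζ₀ ζ₁ hζ₀ hζ₁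
end

section
/- For α* > 2, γ* = √(α*²-3), and F* > 0, the coefficient b₁ = 3F*(2α*⁵ - 18α* + (2α*⁴ + 3α*² + 9)γ*)/(2(α*² + 3 + α*γ*)(α*³ - 9α* + (α*²+6)γ*)) is strictly positive. -/
/-! With γ = √(α² - 3), the first factor of the numerator is `2α(α⁴ - 9)` plus a nonnegative
multiple of γ, hence positive as soon as α² > 3. In the cubic factor of the denominator, the term
`(α² + 6)γ` dominates `α(9 - α²)` in absolute value exactly when α > 2, because the difference
of their squares is `27(α² - 4)(α² + 1)`. -/

section

variable {α γ : ℝ}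

lemma quintic_add_mul_pos (hα : 0 < α) (hα3 : 3 < α ^ 2) (hγ : 0 ≤ γ) :
    0 < 2 * α ^ 5 - 18 * α + (2 * α ^ 4 + 3 * α ^ 2 + 9) * γ := by
  have hα4 : 9 < α ^ 4 := by nlinarith
  have hpoly : 0 < 2 * α * (α ^ 4 - 9) := by positivity
  nlinarith [mul_nonneg (by positivity : (0 : ℝ) ≤ 2 * α ^ 4 + 3 * α ^ 2 + 9) hγ]

lemma cubic_add_mul_pos (hα : 2 < α) (hγ : 0 ≤ γ) (hγsq : γ ^ 2 = α ^ 2 - 3) :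
    0 < α ^ 3 - 9 * α + (α ^ 2 + 6) * γ := by
  have hsq : (α * (9 - α ^ 2)) ^ 2 < ((α ^ 2 + 6) * γ) ^ 2 := by
    have hdiff : ((α ^ 2 + 6) * γ) ^ 2 - (α * (9 - α ^ 2)) ^ 2 = 27 * (α ^ 2 - 4) * (α ^ 2 + 1) := by
      rw [mul_pow, hγsq]; ring
    have : 0 < 27 * (α ^ 2 - 4) * (α ^ 2 + 1) := by
      have : 0 < α ^ 2 - 4 := by nlinarith
      positivity
    linarith
  have := lt_of_pow_lt_pow_left₀ 2 (by positivity) hsq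
  linarith

end

theorem stmt_17 (α F : ℝ) (hα : 2 < α) (hF : 0 < F)
    (γ : ℝ) (hγ : γ = Real.sqrt (α ^ 2 - 3)) :
    0 < 3 * F * (2 * α ^ 5 - 18 * α + (2 * α ^ 4 + 3 * α ^ 2 + 9) * γ) /
      (2 * (α ^ 2 + 3 + α * γ) * (α ^ 3 - 9 * α + (α ^ 2 + 6) * γ)) := by
  have hα0 : 0 < α := by linarith
  have hα3 : 3 < α ^ 2 := by nlinarith
  have hγ0 : 0 ≤ γ := hγ ▸ Real.sqrt_nonneg _
  have hγsq : γ ^ 2 = α ^ 2 - 3 := by rw [hγ, Real.sq_sqrt (by linarith)]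
  have hnum := quintic_add_mul_pos hα0 hα3 hγ0
  have hcubic := cubic_add_mul_pos hα hγ0 hγsq
  have hquad : 0 < α ^ 2 + 3 + α * γ := by positivity
  positivity
end

section
/- Let a₁, b₁, c₁, μ, ω*, K be real numbers with b₁ ≠ 0, K ≥ 0 and (-a₁μ - c₁K)/b₁ ≥ 0. Set A_K = √((-a₁μ - c₁K)/b₁) and δ_K = √(b₁A_K/2) (assuming b₁A_K ≥ 0). Then A(x) = A_K(1 - 3 sech²(δ_K x)), B(x) = A'(x), C(x) = √K e^{i(ω*x + φ)} solves the truncated system A' = B, B' = a₁μ + b₁A² + c₁|C|², C' = iω*C, for any phase φ, and A(x) → A_K as |x| → ∞. -/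
/-!
Write `s = sech² (δ x)`. Then `A = A_K (1 - 3 s)`, `A' = 6 A_K δ sinh (δ x) sech³ (δ x)` and,
using `sinh² = cosh² - 1`, `A'' = 6 A_K δ² (3 s² - 2 s)`. On the other hand, by the choice of
`A_K`, `a₁ μ + b₁ A² + c₁ K = b₁ (A² - A_K²) = b₁ A_K² (9 s² - 6 s)`, and the two agree exactly
when `2 δ² = b₁ A_K`. The profile tends to `A_K` at `±∞` because `sech (δ x) → 0` when `δ ≠ 0`;
if `δ = 0` then `A_K = 0` and the profile vanishes identically.
-/

open Real Filter

noncomputable def solitaryProfile (a d x : ℝ) : ℝ := a * (1 - 3 * (cosh (d * x))⁻¹ ^ 2)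

lemma Real.tendsto_cosh_atTop : Tendsto cosh atTop atTop :=
  tendsto_atTop_mono (fun x => by rw [cosh_eq]; linarith [exp_pos (-x)])
    (tendsto_exp_atTop.atTop_div_const two_pos)

lemma Real.tendsto_cosh_cocompact : Tendsto cosh (cocompact ℝ) atTop := by
  simpa [Function.comp_def, cosh_abs] using
    tendsto_cosh_atTop.comp (tendsto_norm_cocompact_atTop (E := ℝ))

lemma hasDerivAt_inv_cosh_mul_pow (d x : ℝ) (n : ℕ) :
    HasDerivAt (fun x => (cosh (d * x))⁻¹ ^ n)
      (-(n * d * sinh (d * x) * (cosh (d * x))⁻¹ ^ (n + 1))) x := by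
  have hc : cosh (d * x) ≠ 0 := (cosh_pos _).ne'
  have h := ((((hasDerivAt_id x).const_mul d).cosh).inv hc).pow n
  refine h.congr_deriv ?_
  rcases n with _ | n
  · simp
  simp only [id, mul_one, Pi.inv_apply, add_tsub_cancel_right, inv_pow]
  field_simp
  ring

lemma hasDerivAt_solitaryProfile (a d x : ℝ) :
    HasDerivAt (solitaryProfile a d) (6 * a * d * sinh (d * x) * (cosh (d * x))⁻¹ ^ 3) x := by
  refine ((((hasDerivAt_inv_cosh_mul_pow d x 2).const_mul 3).const_sub 1).const_mul a).congr_deriv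
    ?_
  push_cast
  ring

lemma hasDerivAt_deriv_solitaryProfile (a d x : ℝ) :
    HasDerivAt (fun x => 6 * a * d * sinh (d * x) * (cosh (d * x))⁻¹ ^ 3)
      (6 * a * d ^ 2 * (3 * ((cosh (d * x))⁻¹ ^ 2) ^ 2 - 2 * (cosh (d * x))⁻¹ ^ 2)) x := by
  have hc : cosh (d * x) ≠ 0 := (cosh_pos _).ne'
  have h := (((hasDerivAt_id x).const_mul d).sinh.const_mul (6 * a * d)).mul
    (hasDerivAt_inv_cosh_mul_pow d x 3)
  refine h.congr_deriv ?_
  simp only [id, mul_one]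
  push_cast
  field_simp
  linear_combination (-3 * a * d ^ 2) * sinh_sq (d * x)

/-- With `s = sech² (d x)` the left side is the second derivative of `solitaryProfile a d`, so the
profile solves `A'' = b (A² - a²)`. -/
lemma deriv_deriv_solitaryProfile_eq {a b d : ℝ} (hd : 2 * d ^ 2 = b * a) (s : ℝ) :
    6 * a * d ^ 2 * (3 * s ^ 2 - 2 * s) = b * ((a * (1 - 3 * s)) ^ 2 - a ^ 2) := by
  linear_combination (3 * a * (3 * s ^ 2 - 2 * s)) * hd

lemma tendsto_solitaryProfile_cocompact (a : ℝ) {d : ℝ} (hd : d ≠ 0) :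
    Tendsto (solitaryProfile a d) (cocompact ℝ) (nhds a) := by
  have hsech : Tendsto (fun x => (cosh (d * x))⁻¹) (cocompact ℝ) (nhds 0) :=
    (tendsto_cosh_cocompact.comp (tendsto_cocompact_mul_left₀ hd)).inv_tendsto_atTop
  have h := (((hsech.pow 2).const_mul 3).const_sub 1).const_mul a
  rw [zero_pow two_ne_zero, mul_zero, sub_zero, mul_one] at h
  exact h

lemma hasDerivAt_ofReal_mul_cexp_I_mul (r ω φ x : ℝ) :
    HasDerivAt (fun x : ℝ => (r : ℂ) * Complex.exp (Complex.I * (ω * x + φ)))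
      (Complex.I * ω * ((r : ℂ) * Complex.exp (Complex.I * (ω * x + φ)))) x := by
  refine ((((hasDerivAt_id x).ofReal_comp.const_mul (ω : ℂ)).add_const (φ : ℂ)).const_mul
    Complex.I).cexp.const_mul (r : ℂ) |>.congr_deriv ?_
  simp only [id]
  push_cast
  ring

lemma norm_ofReal_mul_cexp_I_mul (r θ : ℝ) : ‖(r : ℂ) * Complex.exp (Complex.I * θ)‖ = |r| := by
  rw [norm_mul, mul_comm Complex.I, Complex.norm_exp_ofReal_mul_I, Complex.norm_real,
    Real.norm_eq_abs, mul_one]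

theorem stmt_18 (a₁ b₁ c₁ μ ω K φ : ℝ) (hb : b₁ ≠ 0) (hK : 0 ≤ K)
    (hpos : 0 ≤ (-a₁ * μ - c₁ * K) / b₁)
    (AK δ : ℝ) (hAK : AK = Real.sqrt ((-a₁ * μ - c₁ * K) / b₁))
    (hAKb : 0 ≤ b₁ * AK) (hδ : δ = Real.sqrt (b₁ * AK / 2))
    (A B : ℝ → ℝ) (C : ℝ → ℂ)
    (hA : A = fun x => AK * (1 - 3 * ((Real.cosh (δ * x))⁻¹) ^ 2))
    (hB : B = deriv A)
    (hC : C = fun (x : ℝ) => (Real.sqrt K : ℂ) * Complex.exp (Complex.I * (ω * x + φ))) :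
    (∀ x : ℝ,
      HasDerivAt A (B x) x ∧
      HasDerivAt B (a₁ * μ + b₁ * (A x) ^ 2 + c₁ * ‖C x‖ ^ 2) x ∧
      HasDerivAt C (Complex.I * ω * C x) x) ∧
    Filter.Tendsto A Filter.atTop (nhds AK) ∧
    Filter.Tendsto A Filter.atBot (nhds AK) := by
  change A = solitaryProfile AK δ at hA
  subst hA hC
  have hAK_sq : b₁ * AK ^ 2 = -a₁ * μ - c₁ * K := by
    rw [hAK, sq_sqrt hpos]
    field_simp
  have hδ_sq : 2 * δ ^ 2 = b₁ * AK := by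
    rw [hδ, sq_sqrt (by positivity)]
    ring
  have hB' : B = fun x => 6 * AK * δ * sinh (δ * x) * (cosh (δ * x))⁻¹ ^ 3 :=
    hB ▸ funext fun x => (hasDerivAt_solitaryProfile AK δ x).deriv
  have hnormC (x : ℝ) : ‖(√K : ℂ) * Complex.exp (Complex.I * (ω * x + φ))‖ ^ 2 = K := by
    rw [← Complex.ofReal_mul, ← Complex.ofReal_add, norm_ofReal_mul_cexp_I_mul, sq_abs,
      sq_sqrt hK]
  refine ⟨fun x => ⟨hB' ▸ hasDerivAt_solitaryProfile AK δ x, ?_,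
    hasDerivAt_ofReal_mul_cexp_I_mul _ ω φ x⟩, ?_⟩
  · rw [hB', hnormC]
    convert hasDerivAt_deriv_solitaryProfile AK δ x using 1
    rw [deriv_deriv_solitaryProfile_eq hδ_sq, solitaryProfile]
    linear_combination hAK_sq
  · rcases eq_or_ne AK 0 with rfl | hAK0
    · have h0 : solitaryProfile 0 δ = fun _ => 0 := funext fun _ => zero_mul _
      simp [h0]
    have hδ0 : δ ≠ 0 := by
      rintro rfl
      exact mul_ne_zero hb hAK0 (by linarith)
    have h := tendsto_solitaryProfile_cocompact AK hδ0
    exact ⟨h.mono_left atTop_le_cocompact, h.mono_left atBot_le_cocompact⟩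
end
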